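/- arXiv:1606.00622 — 3 statements merged into one kernel-verified Lean document; each statement's English description precedes it below -/
import Mathlib

section
/- Let π_1, π_2 be probability vectors on {1,...,K}, Q a K×K row-stochastic matrix, and f_1,...,f_K ∈ L²(Y,μ) with ‖f_k‖_2 ≤ C_2 for all k. Then ‖g^{π_1,Q,f} − g^{π_2,Q,f}‖_2² ≤ K C_2^{2L} ‖π_1 − π_2‖_2², where g^{π,Q,f}(y_1,...,y_L) = Σ_{k_1,...,k_L} π(k_1) ∏_{i=2}^L Q(k_{i−1},k_i) ∏_{i=1}^L f_{k_i}(y_i). -/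
open MeasureTheory

/-- The density of the first `L` observations of a HMM with initial distribution `π`,
transition matrix `Q` and emission densities `f`:
`g^{π,Q,f}(y_1,…,y_L) = ∑_{k_1,…,k_L} π(k_1) ∏_{i=2}^L Q(k_{i-1},k_i) ∏_{i=1}^L f_{k_i}(y_i)`. -/
noncomputable def hmmG {Y : Type*} {K L : ℕ} (π : Fin K → ℝ) (Q : Matrix (Fin K) (Fin K) ℝ)
    (f : Fin K → Y → ℝ) : (Fin L → Y) → ℝ :=
  fun y => ∑ k : Fin L → Fin K,
    (∏ i : Fin L, if (i : ℕ) = 0 then π (k i)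
      else Q (k ⟨i.1 - 1, lt_of_le_of_lt (Nat.sub_le _ _) i.isLt⟩) (k i)) *
    ∏ i : Fin L, f (k i) (y i)

/-- `π` is a probability vector. -/
def IsProbVec {K : ℕ} (π : Fin K → ℝ) : Prop := (∀ k, 0 ≤ π k) ∧ ∑ k, π k = 1

/-- `Q` is a row-stochastic matrix. -/
def IsStochastic {K : ℕ} (Q : Matrix (Fin K) (Fin K) ℝ) : Prop :=
  (∀ i j, 0 ≤ Q i j) ∧ ∀ i, ∑ j, Q i j = 1

/-! For `L ≥ 1` the density is linear in the initial distribution, `g^π = ∑ⱼ π(j) g^{δⱼ}`, so by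
Cauchy–Schwarz `(g^{π₁} - g^{π₂})² ≤ ‖π₁ - π₂‖² ∑ⱼ (g^{δⱼ})²`. Each `g^{δⱼ}(y)` is a convex
combination, weighted by the path probabilities, of the products `∏ᵢ f_{kᵢ}(yᵢ)`; by Jensen its
square is at most the same combination of the squared products, whose integrals are
`∏ᵢ ‖f_{kᵢ}‖₂² ≤ C₂^{2L}` by Fubini. -/

def pathWeight {K L : ℕ} (π : Fin K → ℝ) (Q : Matrix (Fin K) (Fin K) ℝ) (k : Fin L → Fin K) :
    ℝ :=
  ∏ i : Fin L, if (i : ℕ) = 0 then π (k i)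
    else Q (k ⟨i.1 - 1, lt_of_le_of_lt (Nat.sub_le _ _) i.isLt⟩) (k i)

lemma hmmG_eq {Y : Type*} {K L : ℕ} (π : Fin K → ℝ) (Q : Matrix (Fin K) (Fin K) ℝ)
    (f : Fin K → Y → ℝ) (y : Fin L → Y) :
    hmmG π Q f y = ∑ k, pathWeight π Q k * ∏ i, f (k i) (y i) := rfl

lemma pathWeight_cons {K n : ℕ} (π : Fin K → ℝ) (Q : Matrix (Fin K) (Fin K) ℝ) (j : Fin K)
    (k : Fin n → Fin K) :
    pathWeight π Q (Fin.cons j k : Fin (n + 1) → Fin K) = π j * pathWeight (Q j) Q k := by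
  rw [pathWeight, Fin.prod_univ_succ]
  congr 1
  refine Finset.prod_congr rfl fun i _ => ?_
  rcases i with ⟨_ | m, hm⟩ <;> rfl

lemma pathWeight_eq_head_mul {K n : ℕ} (π : Fin K → ℝ) (Q : Matrix (Fin K) (Fin K) ℝ)
    (k : Fin (n + 1) → Fin K) : pathWeight π Q k = π (k 0) * pathWeight 1 Q k := by
  simp only [pathWeight, Fin.prod_univ_succ]
  simp

lemma pathWeight_nonneg {K L : ℕ} {π : Fin K → ℝ} {Q : Matrix (Fin K) (Fin K) ℝ}
    (hπ : ∀ k, 0 ≤ π k) (hQ : ∀ i j, 0 ≤ Q i j) (k : Fin L → Fin K) : 0 ≤ pathWeight π Q k :=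
  Finset.prod_nonneg fun i _ => by split_ifs <;> simp [*]

lemma sum_pathWeight {K : ℕ} {Q : Matrix (Fin K) (Fin K) ℝ} (hQ : ∀ i, ∑ j, Q i j = 1) :
    ∀ {L : ℕ} {π : Fin K → ℝ}, ∑ k, π k = 1 → ∑ k : Fin L → Fin K, pathWeight π Q k = 1
  | 0, _, _ => by simp [pathWeight]
  | L + 1, π, hπ => by
    rw [← (Fin.consEquiv fun _ => Fin K).sum_comp, Fintype.sum_prod_type]
    simp only [Fin.consEquiv, Equiv.coe_fn_mk, pathWeight_cons, ← Finset.mul_sum,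
      sum_pathWeight hQ (hQ _), mul_one, hπ]

lemma isProbVec_single {K : ℕ} (j : Fin K) : IsProbVec (Pi.single j 1) :=
  ⟨fun k => by by_cases h : k = j <;> simp [h], by simp⟩

lemma hmmG_eq_sum_single {Y : Type*} {K n : ℕ} (π : Fin K → ℝ) (Q : Matrix (Fin K) (Fin K) ℝ)
    (f : Fin K → Y → ℝ) (y : Fin (n + 1) → Y) :
    hmmG π Q f y = ∑ j, π j * hmmG (Pi.single j 1) Q f y := by
  simp only [hmmG_eq, Finset.mul_sum, pathWeight_eq_head_mul π Q,
    pathWeight_eq_head_mul (Pi.single _ 1) Q]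
  rw [Finset.sum_comm]
  refine Finset.sum_congr rfl fun k _ => ?_
  simp [Pi.single_apply, mul_assoc]

section ProductIntegrals

variable {ι : Type*} [Fintype ι] {X : ι → Type*} [∀ i, MeasurableSpace (X i)]
  {μ : ∀ i, Measure (X i)} [∀ i, SigmaFinite (μ i)]

lemma integral_sq_prod (g : ∀ i, X i → ℝ) :
    ∫ x, (∏ i, g i (x i)) ^ 2 ∂Measure.pi μ = ∏ i, ∫ x, g i x ^ 2 ∂μ i := by
  simp_rw [← Finset.prod_pow]
  exact integral_fintype_prod_eq_prod fun i x => g i x ^ 2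

lemma integrable_sq_prod {g : ∀ i, X i → ℝ} (hg : ∀ i, MemLp (g i) 2 (μ i)) :
    Integrable (fun x => (∏ i, g i (x i)) ^ 2) (Measure.pi μ) := by
  simp_rw [← Finset.prod_pow]
  exact Integrable.fintype_prod_dep fun i => (hg i).integrable_sq

end ProductIntegrals

def hmmGSqBound {Y : Type*} {K L : ℕ} (π : Fin K → ℝ) (Q : Matrix (Fin K) (Fin K) ℝ)
    (f : Fin K → Y → ℝ) (y : Fin L → Y) : ℝ :=
  ∑ k, pathWeight π Q k * (∏ i, f (k i) (y i)) ^ 2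

lemma sq_hmmG_le_hmmGSqBound {Y : Type*} {K L : ℕ} {π : Fin K → ℝ}
    {Q : Matrix (Fin K) (Fin K) ℝ} (hπ : IsProbVec π) (hQ : IsStochastic Q) (f : Fin K → Y → ℝ)
    (y : Fin L → Y) : hmmG π Q f y ^ 2 ≤ hmmGSqBound π Q f y :=
  (even_two.convexOn_pow (𝕜 := ℝ)).map_sum_le (fun k _ => pathWeight_nonneg hπ.1 hQ.1 k)
    (sum_pathWeight hQ.2 hπ.2) fun _ _ => Set.mem_univ _

section Integrals

variable {Y : Type*} [MeasurableSpace Y] {μ : Measure Y} [SigmaFinite μ] {K L : ℕ}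
  {π : Fin K → ℝ} {Q : Matrix (Fin K) (Fin K) ℝ} {f : Fin K → Y → ℝ}

lemma integrable_hmmGSqBound (hf : ∀ k, MemLp (f k) 2 μ) :
    Integrable (hmmGSqBound (L := L) π Q f) (Measure.pi fun _ => μ) :=
  integrable_finsetSum _ fun k _ => (integrable_sq_prod fun i => hf (k i)).const_mul _

lemma integral_hmmGSqBound_le (hπ : IsProbVec π) (hQ : IsStochastic Q)
    (hfL2 : ∀ k, MemLp (f k) 2 μ) {C : ℝ} (hf : ∀ k, ∫ y, f k y ^ 2 ∂μ ≤ C ^ 2) :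
    ∫ y, hmmGSqBound (L := L) π Q f y ∂(Measure.pi fun _ => μ) ≤ C ^ (2 * L) := by
  have hprod (k : Fin L → Fin K) :
      ∫ y, (∏ i, f (k i) (y i)) ^ 2 ∂(Measure.pi fun _ => μ) ≤ C ^ (2 * L) := by
    rw [integral_sq_prod, pow_mul, ← Fin.prod_const]
    exact Finset.prod_le_prod (fun i _ => integral_nonneg fun _ => sq_nonneg _)
      fun i _ => hf (k i)
  calc ∫ y, hmmGSqBound π Q f y ∂(Measure.pi fun _ => μ)
      = ∑ k : Fin L → Fin K,
          pathWeight π Q k * ∫ y, (∏ i, f (k i) (y i)) ^ 2 ∂(Measure.pi fun _ => μ) := by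
        unfold hmmGSqBound
        rw [integral_finsetSum _ fun k _ => (integrable_sq_prod fun i => hfL2 (k i)).const_mul _]
        simp only [integral_const_mul]
    _ ≤ ∑ k, pathWeight π Q k * C ^ (2 * L) := by
        gcongr with k
        · exact pathWeight_nonneg hπ.1 hQ.1 k
        · exact hprod k
    _ = C ^ (2 * L) := by rw [← Finset.sum_mul, sum_pathWeight hQ.2 hπ.2, one_mul]

end Integrals

lemma sq_hmmG_sub_hmmG_le {Y : Type*} {K n : ℕ} (π₁ π₂ : Fin K → ℝ)
    {Q : Matrix (Fin K) (Fin K) ℝ} (hQ : IsStochastic Q) (f : Fin K → Y → ℝ)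
    (y : Fin (n + 1) → Y) :
    (hmmG π₁ Q f y - hmmG π₂ Q f y) ^ 2
      ≤ (∑ j, (π₁ j - π₂ j) ^ 2) * ∑ j, hmmGSqBound (Pi.single j 1) Q f y :=
  calc (hmmG π₁ Q f y - hmmG π₂ Q f y) ^ 2
      = (∑ j, (π₁ j - π₂ j) * hmmG (Pi.single j 1) Q f y) ^ 2 := by
        simp only [hmmG_eq_sum_single π₁, hmmG_eq_sum_single π₂, ← Finset.sum_sub_distrib,
          sub_mul]
    _ ≤ (∑ j, (π₁ j - π₂ j) ^ 2) * ∑ j, hmmG (Pi.single j 1) Q f y ^ 2 :=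
        Finset.sum_mul_sq_le_sq_mul_sq _ _ _
    _ ≤ (∑ j, (π₁ j - π₂ j) ^ 2) * ∑ j, hmmGSqBound (Pi.single j 1) Q f y := by
        gcongr with j
        exact sq_hmmG_le_hmmGSqBound (isProbVec_single j) hQ f y

theorem hmmG_diff_initial_le_general {Y : Type*} [MeasurableSpace Y] (μ : Measure Y) [SigmaFinite μ]
    (K L : ℕ) (hL : 1 ≤ L)
    (π₁ π₂ : Fin K → ℝ)
    (Q : Matrix (Fin K) (Fin K) ℝ) (hQ : IsStochastic Q)
    (f : Fin K → Y → ℝ) (hfL2 : ∀ k, MemLp (f k) 2 μ)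
    (C2 : ℝ) (hf : ∀ k, ∫ y, (f k y) ^ 2 ∂μ ≤ C2 ^ 2) :
    ∫ y, (hmmG π₁ Q f y - hmmG π₂ Q f y) ^ 2 ∂(Measure.pi fun _ : Fin L => μ)
      ≤ (K : ℝ) * C2 ^ (2 * L) * ∑ k, (π₁ k - π₂ k) ^ 2 := by
  obtain ⟨n, rfl⟩ := Nat.exists_eq_add_of_le' hL
  set B : Fin K → (Fin (n + 1) → Y) → ℝ := fun j => hmmGSqBound (Pi.single j 1) Q f
  have hB (j : Fin K) : Integrable (B j) (Measure.pi fun _ => μ) := integrable_hmmGSqBound hfL2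
  calc ∫ y, (hmmG π₁ Q f y - hmmG π₂ Q f y) ^ 2 ∂(Measure.pi fun _ => μ)
      ≤ ∫ y, (∑ j, (π₁ j - π₂ j) ^ 2) * ∑ j, B j y ∂(Measure.pi fun _ => μ) :=
        integral_mono_of_nonneg (ae_of_all _ fun _ => sq_nonneg _)
          ((integrable_finsetSum _ fun j _ => hB j).const_mul _)
          (ae_of_all _ (sq_hmmG_sub_hmmG_le π₁ π₂ hQ f))
    _ = (∑ j, (π₁ j - π₂ j) ^ 2) * ∑ j, ∫ y, B j y ∂(Measure.pi fun _ => μ) := by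
        rw [integral_const_mul, integral_finsetSum _ fun j _ => hB j]
    _ ≤ (∑ j, (π₁ j - π₂ j) ^ 2) * ∑ _j : Fin K, C2 ^ (2 * (n + 1)) := by
        gcongr with j
        exact integral_hmmGSqBound_le (isProbVec_single j) hQ hfL2 hf
    _ = (K : ℝ) * C2 ^ (2 * (n + 1)) * ∑ k, (π₁ k - π₂ k) ^ 2 := by
        rw [Finset.sum_const, Finset.card_univ, Fintype.card_fin, nsmul_eq_mul]
        ring

/-- `‖g^{π_1,Q,f} − g^{π_2,Q,f}‖_2² ≤ K C_2^{2L} ‖π_1 − π_2‖_2²` when `‖f_k‖_2 ≤ C_2`. -/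
theorem hmmG_diff_initial_le {Y : Type*} [MeasurableSpace Y] (μ : Measure Y) [SigmaFinite μ]
    (K L : ℕ) (hK : 1 ≤ K) (hL : 1 ≤ L)
    (π₁ π₂ : Fin K → ℝ) (hπ₁ : IsProbVec π₁) (hπ₂ : IsProbVec π₂)
    (Q : Matrix (Fin K) (Fin K) ℝ) (hQ : IsStochastic Q)
    (f : Fin K → Y → ℝ) (hfL2 : ∀ k, MemLp (f k) 2 μ)
    (C2 : ℝ) (hC : 1 ≤ C2) (hf : ∀ k, ∫ y, (f k y) ^ 2 ∂μ ≤ C2 ^ 2) :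
    ∫ y, (hmmG π₁ Q f y - hmmG π₂ Q f y) ^ 2 ∂(Measure.pi fun _ : Fin L => μ)
      ≤ (K : ℝ) * C2 ^ (2 * L) * ∑ k, (π₁ k - π₂ k) ^ 2 :=
  hmmG_diff_initial_le_general μ K L hL π₁ π₂ Q hQ f hfL2 C2 hf
end

section
/- For every ε ∈ (0,2), K ∈ ℕ* and L ∈ ℕ*, the set U of arrays (π(k_1) ∏_{i=2}^L Q(k_{i−1},k_i))_{k∈{1,...,K}^L} with π ranging over probability vectors on {1,...,K} and Q over K×K row-stochastic matrices admits a covering by brackets of ℓ²-size at most ε · L · K^{L/2} (brackets [A,B] with A_k ≤ x_k ≤ B_k entrywise and Σ_k(B_k − A_k)² ≤ ε²L²K^L) whose cardinality is at most (2/ε)^{K²−1}, and with all lower bounds A_k in [0,1]. -/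
open MeasureTheory

/-- The array `(π(k_1) ∏_{i=2}^L Q(k_{i−1},k_i))_{k ∈ {1,…,K}^L}` associated with an initial
distribution `π` and a transition matrix `Q`. -/
noncomputable def hmmWeight {K L : ℕ} (π : Fin K → ℝ) (Q : Matrix (Fin K) (Fin K) ℝ)
    (k : Fin L → Fin K) : ℝ :=
  ∏ i : Fin L, if (i : ℕ) = 0 then π (k i)
    else Q (k ⟨i.1 - 1, lt_of_le_of_lt (Nat.sub_le _ _) i.isLt⟩) (k i)

/-!
Every weight is a product of `L` entries of `π` and `Q`, all in `[0, 1]`, so if each entry is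
known up to `ε` the product is known up to `L ε` (telescoping). The simplex is covered by
`(2 / ε) ^ (K - 1)` boxes of width `ε`: a coordinate `v a` is the difference of two consecutive
cumulative sums, and quantizing the `K - 1` interior cumulative sums at step `ε / 2` yields a
monotone sequence in `{0, …, n}` with `n = ⌊2 / ε⌋₊`; there are `(n + K - 1).choose (K - 1)`
of them, at most `n ^ (K - 1)` once `n ≥ 4`. One such cover for `π` and one for each row of `Q`
give `(2 / ε) ^ ((K - 1) (K + 1))` brackets. The remaining regimes are easy: for `ε L ≥ 1` the
single bracket `[0, 1]` suffices, for `L = 1` the matrix `Q` plays no role, and for `K = 2` both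
coordinates involve an exact end value of the cumulative sums, so step `ε` suffices.
-/
open Finset

theorem Finset.prod_sub_prod_le_sum_sub {ι : Type*} (s : Finset ι) {f g : ι → ℝ}
    (hf : ∀ i ∈ s, 0 ≤ f i) (hfg : ∀ i ∈ s, f i ≤ g i) (hg : ∀ i ∈ s, g i ≤ 1) :
    ∏ i ∈ s, g i - ∏ i ∈ s, f i ≤ ∑ i ∈ s, (g i - f i) := by
  induction s using Finset.cons_induction with
  | empty => simp
  | cons a s ha ih =>
    simp only [forall_mem_cons] at hf hfg hg
    rw [prod_cons, prod_cons, sum_cons]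
    have ih := ih hf.2 hfg.2 hg.2
    have hfs : 0 ≤ ∏ i ∈ s, f i := prod_nonneg hf.2
    have hfs1 : ∏ i ∈ s, f i ≤ 1 := prod_le_one hf.2 fun i hi => (hfg.2 i hi).trans (hg.2 i hi)
    have hsum : 0 ≤ ∑ i ∈ s, (g i - f i) := sum_nonneg fun i hi => sub_nonneg.2 (hfg.2 i hi)
    -- `g a ∏ g - f a ∏ f = g a (∏ g - ∏ f) + (g a - f a) ∏ f`
    nlinarith [mul_le_mul_of_nonneg_left ih (hf.1.trans hfg.1),
      mul_le_mul_of_nonneg_left hfs1 (sub_nonneg.2 hfg.1)]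

/-- A finite family of brackets `[l, u]` inside the unit cube, each of width at most `ε` in every
coordinate, whose union contains `S`. -/
def IsBracketCover {ι : Type*} (ε : ℝ) (S : Set (ι → ℝ)) (B : Finset ((ι → ℝ) × (ι → ℝ))) :
    Prop :=
  (∀ p ∈ B, 0 ≤ p.1 ∧ p.1 ≤ p.2 ∧ p.2 ≤ 1 ∧ ∀ i, p.2 i - p.1 i ≤ ε) ∧
    ∀ x ∈ S, ∃ p ∈ B, p.1 ≤ x ∧ x ≤ p.2

namespace IsBracketCover

variable {ι : Type*} {ε ε' : ℝ} {S : Set (ι → ℝ)} {B : Finset ((ι → ℝ) × (ι → ℝ))}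

theorem mono (hB : IsBracketCover ε S B) (h : ε ≤ ε') : IsBracketCover ε' S B :=
  ⟨fun p hp => let ⟨h0, hlu, h1, hw⟩ := hB.1 p hp; ⟨h0, hlu, h1, fun i => (hw i).trans h⟩, hB.2⟩

theorem singleton_zero_one (hS : S ⊆ Set.Icc 0 1) : IsBracketCover 1 S {(0, 1)} := by
  refine ⟨?_, fun x hx => ⟨_, mem_singleton_self _, hS hx⟩⟩
  simp only [mem_singleton, forall_eq, Pi.one_apply, Pi.zero_apply, sub_zero]
  exact ⟨le_rfl, zero_le_one, le_rfl, fun _ => le_rfl⟩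

theorem sum_sq_sub_le [Fintype ι] (hB : IsBracketCover ε S B) {p} (hp : p ∈ B) :
    ∑ i, (p.2 i - p.1 i) ^ 2 ≤ Fintype.card ι * ε ^ 2 := by
  obtain ⟨-, hlu, -, hw⟩ := hB.1 p hp
  calc ∑ i, (p.2 i - p.1 i) ^ 2 ≤ ∑ _i : ι, ε ^ 2 :=
        sum_le_sum fun i _ => pow_le_pow_left₀ (sub_nonneg.2 (hlu i)) (hw i) 2
    _ = Fintype.card ι * ε ^ 2 := by simp

end IsBracketCover

theorem exists_isBracketCover_of_covers {ι : Type*} {ε : ℝ} {S : Set (ι → ℝ)}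
    (hS : S ⊆ Set.Icc 0 1) (B : Finset ((ι → ℝ) × (ι → ℝ)))
    (hw : ∀ p ∈ B, ∀ i, p.2 i - p.1 i ≤ ε) (hcov : ∀ x ∈ S, ∃ p ∈ B, p.1 ≤ x ∧ x ≤ p.2) :
    ∃ B', IsBracketCover ε S B' ∧ B'.card ≤ B.card := by
  classical
  refine ⟨{p ∈ B.image fun p => (p.1 ⊔ 0, p.2 ⊓ 1) | p.1 ≤ p.2}, ⟨?_, ?_⟩,
    (card_filter_le _ _).trans card_image_le⟩
  · simp only [mem_filter, mem_image]
    rintro _ ⟨⟨p, hp, rfl⟩, hlu⟩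
    refine ⟨le_sup_right, hlu, inf_le_right, fun i => ?_⟩
    have := hw p hp i
    simp only [Pi.sup_apply, Pi.inf_apply, Pi.zero_apply, Pi.one_apply]
    linarith [inf_le_left (a := p.2 i) (b := 1), le_sup_left (a := p.1 i) (b := 0)]
  · intro x hx
    obtain ⟨p, hp, hpx, hxp⟩ := hcov x hx
    have hl : p.1 ⊔ 0 ≤ x := sup_le hpx (hS hx).1
    have hu : x ≤ p.2 ⊓ 1 := le_inf hxp (hS hx).2
    exact ⟨_, mem_filter.2 ⟨mem_image_of_mem _ hp, hl.trans hu⟩, hl, hu⟩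

section HmmWeight

variable {K L : ℕ} {π π' : Fin K → ℝ} {Q Q' : Matrix (Fin K) (Fin K) ℝ}

/-- The set `U` of the theorem. -/
def hmmWeights (K L : ℕ) : Set ((Fin L → Fin K) → ℝ) :=
  Set.image2 hmmWeight {π | IsProbVec π} {Q | IsStochastic Q}

def hmmFactor (π : Fin K → ℝ) (Q : Matrix (Fin K) (Fin K) ℝ) (k : Fin L → Fin K) (i : Fin L) :
    ℝ :=
  if (i : ℕ) = 0 then π (k i) else Q (k ⟨i.1 - 1, lt_of_le_of_lt (Nat.sub_le _ _) i.isLt⟩) (k i)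

theorem hmmFactor_rel (r : ℝ → ℝ → Prop) (hπ : ∀ a, r (π a) (π' a))
    (hQ : ∀ a b, r (Q a b) (Q' a b)) (k : Fin L → Fin K) (i : Fin L) :
    r (hmmFactor π Q k i) (hmmFactor π' Q' k i) := by
  unfold hmmFactor
  split_ifs
  exacts [hπ _, hQ _ _]

theorem hmmWeight_nonneg (hπ : 0 ≤ π) (hQ : ∀ a, 0 ≤ Q a) (k : Fin L → Fin K) :
    0 ≤ hmmWeight π Q k :=
  prod_nonneg fun i _ => hmmFactor_rel (fun x _ => 0 ≤ x) (π' := π) (Q' := Q)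
    (fun a => hπ a) (fun a b => hQ a b) k i

theorem hmmWeight_le_hmmWeight (hπ0 : 0 ≤ π) (hQ0 : ∀ a, 0 ≤ Q a) (hπ : π ≤ π')
    (hQ : ∀ a, Q a ≤ Q' a) (k : Fin L → Fin K) : hmmWeight π Q k ≤ hmmWeight π' Q' k :=
  prod_le_prod (fun i _ => hmmFactor_rel (fun x _ => 0 ≤ x) (π' := π) (Q' := Q)
    (fun a => hπ0 a) (fun a b => hQ0 a b) k i)
    (fun i _ => hmmFactor_rel (· ≤ ·) (fun a => hπ a) (fun a b => hQ a b) k i)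

theorem hmmWeight_le_one (hπ0 : 0 ≤ π) (hQ0 : ∀ a, 0 ≤ Q a) (hπ1 : π ≤ 1) (hQ1 : ∀ a, Q a ≤ 1)
    (k : Fin L → Fin K) : hmmWeight π Q k ≤ 1 :=
  prod_le_one (fun i _ => hmmFactor_rel (fun x _ => 0 ≤ x) (π' := π) (Q' := Q)
    (fun a => hπ0 a) (fun a b => hQ0 a b) k i)
    (fun i _ => hmmFactor_rel (fun x _ => x ≤ 1) (π' := π) (Q' := Q)
    (fun a => hπ1 a) (fun a b => hQ1 a b) k i)

theorem hmmWeight_sub_hmmWeight_le {n : ℕ} {ε η : ℝ} (hπ0 : 0 ≤ π) (hQ0 : ∀ a, 0 ≤ Q a)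
    (hπ : π ≤ π') (hQ : ∀ a, Q a ≤ Q' a) (hπ1 : π' ≤ 1) (hQ1 : ∀ a, Q' a ≤ 1)
    (hπε : ∀ a, π' a - π a ≤ ε) (hQη : ∀ a b, Q' a b - Q a b ≤ η) (k : Fin (n + 1) → Fin K) :
    hmmWeight π' Q' k - hmmWeight π Q k ≤ ε + n * η := by
  have hfac := hmmFactor_rel (fun x y => 0 ≤ x ∧ x ≤ y ∧ y ≤ 1)
    (fun a => ⟨hπ0 a, hπ a, hπ1 a⟩) (fun a b => ⟨hQ0 a b, hQ a b, hQ1 a b⟩) k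
  calc hmmWeight π' Q' k - hmmWeight π Q k
      ≤ ∑ i, (hmmFactor π' Q' k i - hmmFactor π Q k i) :=
        prod_sub_prod_le_sum_sub _ (fun i _ => (hfac i).1) (fun i _ => (hfac i).2.1)
          (fun i _ => (hfac i).2.2)
    _ ≤ ε + ∑ _i : Fin n, η := by
        rw [Fin.sum_univ_succ]
        gcongr with i
        · simpa [hmmFactor] using hπε _
        · simpa [hmmFactor] using hQη _ _
    _ = ε + n * η := by simp

theorem hmmWeights_subset_Icc : hmmWeights K L ⊆ Set.Icc 0 1 := by
  rintro _ ⟨π, hπ, Q, hQ, rfl⟩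
  have hπ1 : π ≤ 1 := (stdSimplex_subset_Icc ℝ hπ).2
  have hQ1 : ∀ a, Q a ≤ 1 := fun a => (stdSimplex_subset_Icc ℝ ⟨hQ.1 a, hQ.2 a⟩).2
  exact ⟨hmmWeight_nonneg hπ.1 hQ.1, hmmWeight_le_one hπ.1 hQ.1 hπ1 hQ1⟩

end HmmWeight

theorem IsBracketCover.exists_hmmWeights {K n : ℕ} {ε η : ℝ}
    {P R : Finset ((Fin K → ℝ) × (Fin K → ℝ))} (hP : IsBracketCover ε (stdSimplex ℝ (Fin K)) P)
    (hR : IsBracketCover η (stdSimplex ℝ (Fin K)) R) :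
    ∃ B, IsBracketCover (ε + n * η) (hmmWeights K (n + 1)) B ∧ B.card ≤ P.card * R.card ^ K := by
  classical
  refine ⟨(P ×ˢ Fintype.piFinset fun _ => R).image fun c =>
      (hmmWeight c.1.1 fun a => (c.2 a).1, hmmWeight c.1.2 fun a => (c.2 a).2), ⟨?_, ?_⟩, ?_⟩
  · simp only [mem_image, mem_product, Fintype.mem_piFinset]
    rintro _ ⟨⟨p, r⟩, ⟨hp, hr⟩, rfl⟩
    obtain ⟨hp0, hpu, hp1, hpw⟩ := hP.1 p hp
    choose hr0 hru hr1 hrw using fun a => hR.1 (r a) (hr a)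
    exact ⟨hmmWeight_nonneg hp0 hr0, hmmWeight_le_hmmWeight hp0 hr0 hpu hru,
      hmmWeight_le_one (hp0.trans hpu) (fun a => (hr0 a).trans (hru a)) hp1 hr1,
      hmmWeight_sub_hmmWeight_le hp0 hr0 hpu hru hp1 hr1 hpw hrw⟩
  · rintro _ ⟨π, hπ, Q, hQ, rfl⟩
    obtain ⟨p, hp, hpπ, hπp⟩ := hP.2 π hπ
    choose r hr hrQ hQr using fun a => hR.2 (Q a) ⟨hQ.1 a, hQ.2 a⟩
    refine ⟨_, mem_image_of_mem _ (a := (p, r)) (mem_product.2 ⟨hp, Fintype.mem_piFinset.2 hr⟩),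
      hmmWeight_le_hmmWeight (hP.1 p hp).1 (fun a => (hR.1 _ (hr a)).1) hpπ hrQ,
      hmmWeight_le_hmmWeight hπ.1 hQ.1 hπp hQr⟩
  · calc _ ≤ (P ×ˢ Fintype.piFinset fun _ => R).card := card_image_le
      _ = P.card * R.card ^ K := by simp

theorem card_filter_monotone_le_choose (m n : ℕ) :
    #{c : Fin m → Fin (n + 1) | Monotone c} ≤ (n + m).choose m := by
  classical
  -- a monotone sequence is the sorted list of its multiset of values
  calc #{c : Fin m → Fin (n + 1) | Monotone c}
      ≤ #(univ : Finset (Sym (Fin (n + 1)) m)) := by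
        refine card_le_card_of_injOn (fun c => ⟨(List.ofFn c : Multiset _), by simp⟩)
          (fun _ _ => mem_univ _) fun c₁ hc₁ c₂ hc₂ h => List.ofFn_injective ?_
        simp only [coe_filter, mem_univ, true_and, Set.mem_ofPred_eq] at hc₁ hc₂
        exact List.Perm.eq_of_sortedLE (List.sortedLE_ofFn_iff.2 hc₁)
          (List.sortedLE_ofFn_iff.2 hc₂) (Multiset.coe_eq_coe.1 (congrArg Subtype.val h))
    _ = (n + m).choose m := by
        rw [card_univ, Sym.card_sym_eq_choose, Fintype.card_fin, Nat.add_right_comm,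
          Nat.add_sub_cancel]

theorem Nat.choose_add_le_pow {n m : ℕ} (hn : 4 ≤ n) (hm : m ≠ 1) : (n + m).choose m ≤ n ^ m := by
  rcases Nat.lt_or_ge m 2 with hm2 | hm2
  · obtain rfl : m = 0 := by omega
    simp
  induction m, hm2 using Nat.le_induction with
  | base =>
    rw [Nat.choose_two_right]
    refine Nat.div_le_of_le_mul ?_
    rw [show n + 2 - 1 = n + 1 by omega]
    nlinarith
  | succ m hm2 ih =>
    refine Nat.le_of_mul_le_mul_right ?_ m.succ_pos
    rw [← add_assoc, ← Nat.add_one_mul_choose_eq, pow_succ]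
    calc (n + m + 1) * (n + m).choose m ≤ (n + m + 1) * n ^ m :=
          Nat.mul_le_mul_left _ (ih (by omega))
      _ ≤ n * (m + 1) * n ^ m := Nat.mul_le_mul_right _ (by nlinarith)
      _ = n ^ m * n * (m + 1) := by ring

section CumulativeSum

variable {K : ℕ} {v : Fin K → ℝ}

def cumSum (v : Fin K → ℝ) (i : ℕ) : ℝ := ∑ b : Fin K, if (b : ℕ) < i then v b else 0

theorem cumSum_zero : cumSum v 0 = 0 := by simp [cumSum]

theorem cumSum_of_le {i : ℕ} (h : K ≤ i) : cumSum v i = ∑ b, v b :=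
  sum_congr rfl fun b _ => if_pos (b.isLt.trans_le h)

theorem cumSum_mono (hv : 0 ≤ v) : Monotone (cumSum v) := fun i j hij =>
  sum_le_sum fun b _ => by split_ifs <;> first | exact le_rfl | exact hv b | omega

theorem cumSum_succ_sub (a : Fin K) : cumSum v (a + 1) - cumSum v a = v a := by
  rw [cumSum, cumSum, ← sum_sub_distrib, sum_eq_single a]
  · simp
  · intro b _ hba
    have : (b : ℕ) ≠ a := Fin.val_ne_of_ne hba
    split_ifs <;> first | omega | ring
  · simp

theorem cumSum_mem_Icc (hv : v ∈ stdSimplex ℝ (Fin K)) (i : ℕ) : cumSum v i ∈ Set.Icc 0 1 :=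
  ⟨cumSum_zero (v := v) ▸ cumSum_mono hv.1 i.zero_le,
    (cumSum_mono hv.1 (le_max_left i K)).trans_eq ((cumSum_of_le (le_max_right i K)).trans hv.2)⟩

/-- Grid approximation from below of `cumSum v i`, `0 ≤ i ≤ K`; the end values `0` and `1` are
exact on the simplex. -/
def cdfGrid (δ : ℝ) (q : Fin (K - 1) → ℕ) (i : ℕ) : ℝ :=
  if i = 0 then 0 else if h : i - 1 < K - 1 then q ⟨i - 1, h⟩ * δ else 1

noncomputable def cdfIndex (δ : ℝ) (v : Fin K → ℝ) (j : Fin (K - 1)) : ℕ := ⌊cumSum v (j + 1) / δ⌋₊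

variable (K) in
def cdfGap (δ : ℝ) (i : ℕ) : ℝ := if i = 0 ∨ K ≤ i then 0 else δ

theorem cdfGrid_le_cumSum {δ : ℝ} (hδ : 0 < δ) (hv : v ∈ stdSimplex ℝ (Fin K)) {i : ℕ}
    (hi : i ≤ K) :
    cdfGrid δ (cdfIndex δ v) i ≤ cumSum v i ∧
      cumSum v i ≤ cdfGrid δ (cdfIndex δ v) i + cdfGap K δ i := by
  unfold cdfGrid cdfGap cdfIndex
  rcases Nat.eq_zero_or_pos i with rfl | hi0
  · simp [cumSum_zero]
  by_cases hiK : i < K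
  · have h : i - 1 < K - 1 := by omega
    rw [if_neg hi0.ne', dif_pos h, if_neg (by omega), Nat.sub_add_cancel hi0]
    have hx := (div_nonneg (cumSum_mem_Icc hv i).1 hδ.le)
    exact ⟨(le_div_iff₀ hδ).1 (Nat.floor_le hx),
      ((div_lt_iff₀ hδ).1 (Nat.lt_floor_add_one _)).le.trans_eq (by ring)⟩
  · rw [if_neg hi0.ne', dif_neg (by omega), if_pos (Or.inr (by omega)), cumSum_of_le (by omega),
      hv.2]
    simp

/-- As `v a = cumSum v (a + 1) - cumSum v a`, the bounds `cdfGrid ≤ cumSum ≤ cdfGrid + cdfGap`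
put `v` in this bracket. -/
def cdfBracket (δ : ℝ) (q : Fin (K - 1) → ℕ) : (Fin K → ℝ) × (Fin K → ℝ) :=
  (fun a => cdfGrid δ q (a + 1) - cdfGrid δ q a - cdfGap K δ a,
    fun a => cdfGrid δ q (a + 1) + cdfGap K δ (a + 1) - cdfGrid δ q a)

theorem cdfBracket_width {δ : ℝ} (hδ : 0 < δ) (q : Fin (K - 1) → ℕ) (a : Fin K) :
    (cdfBracket δ q).2 a - (cdfBracket δ q).1 a ≤ if K ≤ 2 then δ else 2 * δ := by
  have ha := a.isLt
  simp only [cdfBracket, cdfGap]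
  -- for `K ≤ 2` one of the two cumulative sums involved is an exact end value
  split_ifs <;> first | omega | linarith

theorem exists_isBracketCover_stdSimplex {δ : ℝ} (hδ : 0 < δ) :
    ∃ B, IsBracketCover (if K ≤ 2 then δ else 2 * δ) (stdSimplex ℝ (Fin K)) B ∧
      B.card ≤ (⌊δ⁻¹⌋₊ + (K - 1)).choose (K - 1) := by
  classical
  set n := ⌊δ⁻¹⌋₊
  set B₀ := ({q | Monotone q} : Finset (Fin (K - 1) → Fin (n + 1))).image
    fun q => cdfBracket δ fun j => q j
  have hcov : ∀ v ∈ stdSimplex ℝ (Fin K), ∃ p ∈ B₀, p.1 ≤ v ∧ v ≤ p.2 := by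
    intro v hv
    have hq : ∀ j, cdfIndex δ v j < n + 1 := fun j =>
      Nat.lt_succ_of_le (Nat.floor_le_floor (by
        rw [div_eq_mul_inv]
        exact mul_le_of_le_one_left (inv_nonneg.2 hδ.le) (cumSum_mem_Icc hv _).2))
    refine ⟨_, mem_image_of_mem _ (a := fun j => ⟨_, hq j⟩) (mem_filter.2 ⟨mem_univ _, ?_⟩),
      fun a => ?_, fun a => ?_⟩
    · exact fun i j hij => Fin.mk_le_mk.2 (Nat.floor_le_floor (div_le_div_of_nonneg_right
        (cumSum_mono hv.1 (by simpa using hij)) hδ.le))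
    all_goals
      have h₀ := cdfGrid_le_cumSum hδ hv a.isLt.le
      have h₁ := cdfGrid_le_cumSum hδ hv a.isLt
      have hva := cumSum_succ_sub (v := v) a
      simp only [cdfBracket]
      linarith
  obtain ⟨B, hB, hcard⟩ := exists_isBracketCover_of_covers (stdSimplex_subset_Icc ℝ) B₀
    (by simp only [B₀, mem_image]; rintro _ ⟨q, -, rfl⟩; exact cdfBracket_width hδ _) hcov
  exact ⟨B, hB, hcard.trans (card_image_le.trans (card_filter_monotone_le_choose _ _))⟩

end CumulativeSum

theorem exists_isBracketCover_stdSimplex_card_le {K : ℕ} {ε : ℝ} (hε : 0 < ε) (hε' : ε < 1 / 2) :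
    ∃ B, IsBracketCover ε (stdSimplex ℝ (Fin K)) B ∧ (B.card : ℝ) ≤ (2 / ε) ^ (K - 1) := by
  by_cases hK : K = 2
  · subst hK
    obtain ⟨B, hB, hcard⟩ := exists_isBracketCover_stdSimplex (K := 2) hε
    refine ⟨B, by simpa using hB, ?_⟩
    have hfl : (⌊ε⁻¹⌋₊ : ℝ) ≤ ε⁻¹ := Nat.floor_le (inv_nonneg.2 hε.le)
    have hε1 : 1 ≤ ε⁻¹ := by rw [le_inv_comm₀ one_pos hε]; linarith
    calc (B.card : ℝ) ≤ ⌊ε⁻¹⌋₊ + 1 := by exact_mod_cast hcard.trans_eq (Nat.choose_one_right _)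
      _ ≤ (2 / ε) ^ (2 - 1) := by rw [pow_one, div_eq_mul_inv]; linarith
  · obtain ⟨B, hB, hcard⟩ := exists_isBracketCover_stdSimplex (K := K) (half_pos hε)
    refine ⟨B, hB.mono (by split_ifs <;> linarith), ?_⟩
    have hfl : (⌊(ε / 2)⁻¹⌋₊ : ℝ) ≤ 2 / ε := by
      simpa using Nat.floor_le (inv_nonneg.2 (half_pos hε).le)
    have h4 : 4 ≤ ⌊(ε / 2)⁻¹⌋₊ := Nat.le_floor (by
      rw [inv_div, le_div_iff₀ hε]; norm_num; linarith)
    calc (B.card : ℝ) ≤ ((⌊(ε / 2)⁻¹⌋₊ ^ (K - 1) : ℕ) : ℝ) := by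
          exact_mod_cast hcard.trans (Nat.choose_add_le_pow h4 (by omega))
      _ ≤ (2 / ε) ^ (K - 1) := by push_cast; gcongr

theorem exists_isBracketCover_hmmWeights_card_le {K n : ℕ} {ε : ℝ} (hε : 0 < ε)
    (hε' : ε < 1 / 2) :
    ∃ B, IsBracketCover (ε * (n + 1)) (hmmWeights K (n + 1)) B ∧
      (B.card : ℝ) ≤ (2 / ε) ^ (K ^ 2 - 1) := by
  obtain ⟨P, hP, hPcard⟩ := exists_isBracketCover_stdSimplex_card_le (K := K) hε hε'
  obtain ⟨B, hB, hBcard⟩ := hP.exists_hmmWeights (n := n) hP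
  refine ⟨B, hB.mono (le_of_eq (by ring)), ?_⟩
  have hexp : (K - 1) * (K + 1) = K ^ 2 - 1 := by
    simpa [mul_comm] using (Nat.sq_sub_sq K 1).symm
  calc (B.card : ℝ) ≤ P.card * P.card ^ K := by exact_mod_cast hBcard
    _ ≤ (2 / ε) ^ (K - 1) * ((2 / ε) ^ (K - 1)) ^ K := by gcongr
    _ = (2 / ε) ^ (K ^ 2 - 1) := by rw [← pow_succ', ← pow_mul, hexp]

theorem exists_isBracketCover_hmmWeights_one_card_le {K : ℕ} {ε : ℝ} (hε : 0 < ε) (hε1 : ε < 1) :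
    ∃ B, IsBracketCover ε (hmmWeights K 1) B ∧ (B.card : ℝ) ≤ (2 / ε) ^ (K ^ 2 - 1) := by
  -- the rows of `Q` get the single bracket `[0, 1]`, whose width is irrelevant for `L = 1`
  obtain ⟨P, hP, hPcard⟩ :=
    exists_isBracketCover_stdSimplex_card_le (K := K) (half_pos hε) (by linarith)
  obtain ⟨B, hB, hBcard⟩ :=
    hP.exists_hmmWeights (n := 0) (IsBracketCover.singleton_zero_one (stdSimplex_subset_Icc ℝ))
  refine ⟨B, hB.mono (by simp; linarith), ?_⟩
  have h2x : 2 / (ε / 2) ≤ (2 / ε) ^ 2 := by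
    rw [div_div_eq_mul_div, mul_div_assoc, sq]
    exact mul_le_mul_of_nonneg_right (by rw [le_div_iff₀ hε]; linarith) (by positivity)
  have hexp : 2 * (K - 1) ≤ K ^ 2 - 1 := by
    rcases K.eq_zero_or_pos with rfl | hK
    · rfl
    · rw [← one_pow 2, Nat.sq_sub_sq]
      exact Nat.mul_le_mul_right _ (by omega)
  calc (B.card : ℝ) ≤ P.card := by exact_mod_cast hBcard.trans_eq (by simp)
    _ ≤ ((2 / ε) ^ 2) ^ (K - 1) := hPcard.trans (by gcongr)
    _ ≤ (2 / ε) ^ (K ^ 2 - 1) := by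
      rw [← pow_mul]
      exact pow_le_pow_right₀ ((one_le_two).trans (by rw [le_div_iff₀ hε]; linarith)) hexp

theorem bracket_covering_hmm_weights_general (ε : ℝ) (hε0 : 0 < ε) (hε2 : ε < 2)
    (K L : ℕ) (hL : 1 ≤ L) :
    ∃ s : Finset (((Fin L → Fin K) → ℝ) × ((Fin L → Fin K) → ℝ)),
      (s.card : ℝ) ≤ (2 / ε) ^ (K ^ 2 - 1) ∧
      (∀ p ∈ s,
        (∀ k, 0 ≤ p.1 k ∧ p.1 k ≤ 1) ∧
        ∑ k, (p.2 k - p.1 k) ^ 2 ≤ ε ^ 2 * (L : ℝ) ^ 2 * (K : ℝ) ^ L) ∧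
      ∀ (π : Fin K → ℝ) (Q : Matrix (Fin K) (Fin K) ℝ), IsProbVec π → IsStochastic Q →
        ∃ p ∈ s, ∀ k, p.1 k ≤ hmmWeight π Q k ∧ hmmWeight π Q k ≤ p.2 k := by
  obtain ⟨B, hB, hcard⟩ : ∃ B, IsBracketCover (ε * L) (hmmWeights K L) B ∧
      (B.card : ℝ) ≤ (2 / ε) ^ (K ^ 2 - 1) := by
    rcases le_or_gt 1 (ε * L) with hεL | hεL
    · have hx : 1 ≤ 2 / ε := by rw [le_div_iff₀ hε0]; linarith
      exact ⟨_, (IsBracketCover.singleton_zero_one hmmWeights_subset_Icc).mono hεL,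
        by simpa using one_le_pow₀ hx⟩
    obtain ⟨n, rfl⟩ : ∃ n, L = n + 1 := ⟨L - 1, by omega⟩
    rcases Nat.eq_zero_or_pos n with rfl | hn
    · simpa using exists_isBracketCover_hmmWeights_one_card_le hε0 (by simpa using hεL)
    · have : (2 : ℝ) ≤ n + 1 := by exact_mod_cast Nat.succ_le_succ hn
      push_cast at hεL ⊢
      exact exists_isBracketCover_hmmWeights_card_le hε0 (by nlinarith)
  refine ⟨B, hcard, fun p hp => ⟨fun k => ⟨(hB.1 p hp).1 k, ?_⟩, ?_⟩, fun π Q hπ hQ => ?_⟩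
  · exact ((hB.1 p hp).2.1 k).trans ((hB.1 p hp).2.2.1 k)
  · calc _ ≤ _ := hB.sum_sq_sub_le hp
      _ = _ := by simp; ring
  · obtain ⟨p, hp, hlw, hwu⟩ := hB.2 _ (Set.mem_image2_of_mem hπ hQ)
    exact ⟨p, hp, fun k => ⟨hlw k, hwu k⟩⟩

/-- For every `ε ∈ (0,2)`, the set `U` of arrays `(π(k_1) ∏_{i=2}^L Q(k_{i−1},k_i))_k`
(with `π` a probability vector and `Q` row-stochastic) admits a covering by brackets of
`ℓ²`-size at most `ε L K^{L/2}`, with all lower bounds in `[0,1]`, of cardinality at most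
`(2/ε)^{K²−1}`. -/
theorem bracket_covering_hmm_weights (ε : ℝ) (hε0 : 0 < ε) (hε2 : ε < 2)
    (K L : ℕ) (hK : 1 ≤ K) (hL : 1 ≤ L) :
    ∃ s : Finset (((Fin L → Fin K) → ℝ) × ((Fin L → Fin K) → ℝ)),
      (s.card : ℝ) ≤ (2 / ε) ^ (K ^ 2 - 1) ∧
      (∀ p ∈ s,
        (∀ k, 0 ≤ p.1 k ∧ p.1 k ≤ 1) ∧
        ∑ k, (p.2 k - p.1 k) ^ 2 ≤ ε ^ 2 * (L : ℝ) ^ 2 * (K : ℝ) ^ L) ∧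
      ∀ (π : Fin K → ℝ) (Q : Matrix (Fin K) (Fin K) ℝ), IsProbVec π → IsStochastic Q →
        ∃ p ∈ s, ∀ k, p.1 k ≤ hmmWeight π Q k ∧ hmmWeight π Q k ≤ p.2 k :=
  bracket_covering_hmm_weights_general ε hε0 hε2 K L hL
end

section
/- Let A, B > 0 and define H(x) = A·log(max(B/x, 1)) and φ(x) = x√(πA)·(1 + √(log(max(B/x,1)))) for x > 0. Then for all x > 0: (i) x² H(x) ≤ φ(x)², and (ii) ∫_0^x √(H(u)) du ≤ φ(x). -/
/-!
For `0 < u ≤ x` one has `max (B/u) 1 ≤ max (B/x) 1 * (x/u)`, so by subadditivity of `√` the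
integrand `√(log (max (B/u) 1))` is at most `√L + √(log (x/u))` with `L = log (max (B/x) 1)`.
The substitution `u = x e^{-t}` turns `∫_0^x √(log (x/u)) du` into `x Γ(3/2) = x √π / 2`, and
`√L + √π / 2 ≤ √π (1 + √L)`.
-/

open MeasureTheory Set Real

section Substitution

variable {E : Type*} [NormedAddCommGroup E] [NormedSpace ℝ E] {σ : ℝ}

theorem image_mul_exp_neg_Ioi (hσ : 0 < σ) :
    (fun t => σ * exp (-t)) '' Ioi 0 = Ioo 0 σ := by
  ext u
  constructor
  · rintro ⟨t, ht, rfl⟩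
    exact ⟨by positivity, mul_lt_of_lt_one_right hσ (exp_lt_one_iff.mpr (neg_lt_zero.mpr ht))⟩
  · rintro ⟨hu, huσ⟩
    have hu' : 0 < u / σ := div_pos hu hσ
    refine ⟨-log (u / σ), neg_pos.mpr (log_neg hu' ((div_lt_one hσ).mpr huσ)), ?_⟩
    simp only [neg_neg, exp_log hu']
    field_simp

theorem integrableOn_Ioc_iff_comp_mul_exp_neg (g : ℝ → E) (hσ : 0 < σ) :
    IntegrableOn g (Ioc 0 σ) ↔
      IntegrableOn (fun t => (σ * exp (-t)) • g (σ * exp (-t))) (Ioi 0) := by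
  rw [integrableOn_Ioc_iff_integrableOn_Ioo, ← image_mul_exp_neg_Ioi hσ]
  simpa [abs_of_pos hσ] using integrableOn_image_iff_integrableOn_abs_deriv_smul
    measurableSet_Ioi (fun t _ => (((hasDerivAt_neg t).exp).const_mul σ).hasDerivWithinAt)
    (fun a _ b _ h => by simpa [hσ.ne'] using h) g

theorem integral_Ioc_eq_integral_comp_mul_exp_neg (g : ℝ → E) (hσ : 0 < σ) :
    ∫ u in Ioc 0 σ, g u = ∫ t in Ioi 0, (σ * exp (-t)) • g (σ * exp (-t)) := by
  rw [integral_Ioc_eq_integral_Ioo, ← image_mul_exp_neg_Ioi hσ]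
  simpa [abs_of_pos hσ] using integral_image_eq_integral_abs_deriv_smul
    measurableSet_Ioi (fun t _ => (((hasDerivAt_neg t).exp).const_mul σ).hasDerivWithinAt)
    (fun a _ b _ h => by simpa [hσ.ne'] using h) g

end Substitution

theorem sqrt_add_le_add_sqrt {a b : ℝ} (ha : 0 ≤ a) (hb : 0 ≤ b) : √(a + b) ≤ √a + √b :=
  sqrt_le_iff.mpr
    ⟨by positivity, by nlinarith [sq_sqrt ha, sq_sqrt hb, sqrt_nonneg a, sqrt_nonneg b]⟩

section LogPower

variable {σ s : ℝ}

theorem mul_exp_neg_smul_rpow_log_div (hσ : 0 < σ) (s t : ℝ) :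
    (σ * exp (-t)) • log (σ / (σ * exp (-t))) ^ (s - 1) = σ * (exp (-t) * t ^ (s - 1)) := by
  rw [div_mul_cancel_left₀ hσ.ne', ← exp_neg, neg_neg, log_exp, smul_eq_mul, mul_assoc]

theorem integrableOn_rpow_log_div (hσ : 0 < σ) (hs : 0 < s) :
    IntegrableOn (fun u => log (σ / u) ^ (s - 1)) (Ioc 0 σ) := by
  rw [integrableOn_Ioc_iff_comp_mul_exp_neg _ hσ]
  simp only [mul_exp_neg_smul_rpow_log_div hσ]
  exact (GammaIntegral_convergent hs).const_mul σ

theorem integral_rpow_log_div (hσ : 0 < σ) (hs : 0 < s) :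
    ∫ u in Ioc 0 σ, log (σ / u) ^ (s - 1) = σ * Gamma s := by
  simp only [integral_Ioc_eq_integral_comp_mul_exp_neg _ hσ, mul_exp_neg_smul_rpow_log_div hσ,
    integral_const_mul, Gamma_eq_integral hs]

theorem sqrt_eq_rpow_three_halves_sub_one (y : ℝ) : √y = y ^ ((3 / 2 : ℝ) - 1) := by
  rw [sqrt_eq_rpow]; norm_num

theorem integrableOn_sqrt_log_div (hσ : 0 < σ) :
    IntegrableOn (fun u => √(log (σ / u))) (Ioc 0 σ) := by
  simpa only [sqrt_eq_rpow_three_halves_sub_one] using integrableOn_rpow_log_div hσ (by norm_num)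

theorem integral_sqrt_log_div (hσ : 0 < σ) :
    ∫ u in Ioc 0 σ, √(log (σ / u)) = σ * (√π / 2) := by
  have hΓ : Gamma (3 / 2) = √π / 2 := by
    convert Gamma_nat_add_half 1 using 2 <;> norm_num
  simp only [sqrt_eq_rpow_three_halves_sub_one,
    integral_rpow_log_div hσ (by norm_num : (0 : ℝ) < 3 / 2), hΓ]

end LogPower

theorem log_max_div_one_le {B u x : ℝ} (hu : 0 < u) (hux : u ≤ x) :
    log (max (B / u) 1) ≤ log (max (B / x) 1) + log (x / u) := by
  have hxu : 1 ≤ x / u := (one_le_div hu).mpr hux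
  have hmax : max (B / u) 1 ≤ max (B / x) 1 * (x / u) := by
    rw [max_mul_of_nonneg _ _ (by positivity), div_mul_div_cancel₀ (hu.trans_le hux).ne', one_mul]
    exact max_le_max le_rfl hxu
  rw [← log_mul (by positivity) (by positivity)]
  exact log_le_log (by positivity) hmax

theorem sqrt_log_max_div_one_le {B u x : ℝ} (hu : 0 < u) (hux : u ≤ x) :
    √(log (max (B / u) 1)) ≤ √(log (max (B / x) 1)) + √(log (x / u)) :=
  (sqrt_le_sqrt (log_max_div_one_le hu hux)).trans <|
    sqrt_add_le_add_sqrt (log_nonneg (le_max_right _ _)) (log_nonneg ((one_le_div hu).mpr hux))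

theorem integral_sqrt_log_max_div_one_le (B : ℝ) {x : ℝ} (hx : 0 < x) :
    ∫ u in Ioc 0 x, √(log (max (B / u) 1)) ≤ x * (√(log (max (B / x) 1)) + √π / 2) := by
  calc ∫ u in Ioc 0 x, √(log (max (B / u) 1))
      ≤ ∫ u in Ioc 0 x, (√(log (max (B / x) 1)) + √(log (x / u))) := by
        refine integral_mono_of_nonneg (ae_of_all _ fun u => sqrt_nonneg _)
          ((integrable_const _).add (integrableOn_sqrt_log_div hx)) ?_
        exact (ae_restrict_iff' measurableSet_Ioc).mpr
          (ae_of_all _ fun u hu => sqrt_log_max_div_one_le hu.1 hu.2)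
    _ = x * (√(log (max (B / x) 1)) + √π / 2) := by
        rw [integral_add (integrable_const _) (integrableOn_sqrt_log_div hx), setIntegral_const,
          integral_sqrt_log_div hx, volume_real_Ioc_of_le hx.le, smul_eq_mul]
        ring

theorem le_pi_mul_sq_one_add_sqrt {L : ℝ} (hL : 0 ≤ L) : L ≤ π * (1 + √L) ^ 2 := by
  nlinarith [pi_gt_three, sq_sqrt hL, sqrt_nonneg L]

theorem entropy_phi_bounds_general (A B : ℝ) (hA : 0 < A) (x : ℝ) (hx : 0 < x) :
    x ^ 2 * (A * Real.log (max (B / x) 1))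
      ≤ (x * Real.sqrt (Real.pi * A) * (1 + Real.sqrt (Real.log (max (B / x) 1)))) ^ 2 ∧
    (∫ u in Set.Ioc (0 : ℝ) x, Real.sqrt (A * Real.log (max (B / u) 1)))
      ≤ x * Real.sqrt (Real.pi * A) * (1 + Real.sqrt (Real.log (max (B / x) 1))) := by
  set L := log (max (B / x) 1)
  have hL : 0 ≤ L := log_nonneg (le_max_right _ _)
  constructor
  · calc x ^ 2 * (A * L) ≤ x ^ 2 * (A * (π * (1 + √L) ^ 2)) := by
          gcongr; exact le_pi_mul_sq_one_add_sqrt hL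
      _ = (x * √(π * A) * (1 + √L)) ^ 2 := by
          rw [mul_pow, mul_pow, sq_sqrt (by positivity)]; ring
  · calc ∫ u in Ioc 0 x, √(A * log (max (B / u) 1))
        = √A * ∫ u in Ioc 0 x, √(log (max (B / u) 1)) := by
          simp only [sqrt_mul hA.le, integral_const_mul]
      _ ≤ √A * (x * (√L + √π / 2)) := by
          gcongr; exact integral_sqrt_log_max_div_one_le B hx
      _ ≤ x * √(π * A) * (1 + √L) := by
          have hxA : 0 ≤ x * √A := by positivity
          have hπ : 1 ≤ √π := one_le_sqrt.mpr (by linarith [pi_gt_three])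
          rw [sqrt_mul pi_pos.le]
          nlinarith [mul_nonneg (mul_nonneg hxA (sqrt_nonneg L)) (sub_nonneg.mpr hπ),
            mul_nonneg hxA (sqrt_nonneg π)]

/-- For `H(x) = A log(max(B/x, 1))` and `φ(x) = x √(πA) (1 + √(log(max(B/x,1))))`:
(i) `x² H(x) ≤ φ(x)²` and (ii) `∫_0^x √(H(u)) du ≤ φ(x)` for all `x > 0`. -/
theorem entropy_phi_bounds (A B : ℝ) (hA : 0 < A) (hB : 0 < B) (x : ℝ) (hx : 0 < x) :
    x ^ 2 * (A * Real.log (max (B / x) 1))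
      ≤ (x * Real.sqrt (Real.pi * A) * (1 + Real.sqrt (Real.log (max (B / x) 1)))) ^ 2 ∧
    (∫ u in Set.Ioc (0 : ℝ) x, Real.sqrt (A * Real.log (max (B / u) 1)))
      ≤ x * Real.sqrt (Real.pi * A) * (1 + Real.sqrt (Real.log (max (B / x) 1))) :=
  entropy_phi_bounds_general A B hA x hx
end
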